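/- arXiv:1304.3402 — 4 statements merged into one kernel-verified Lean document; each statement's English description precedes it below -/
import Mathlib

section
/- Let α = cos(θ/2)/(4 sin(θ/2)) with θ = 2π/k for an even integer k ≥ 4, let f(ℓ) = (√π/(ℓ√(2α))) · exp(−αℓ²/2) · erf(ℓ√(α/2)) and p(ℓ) = 2αℓ·exp(−αℓ²). Then ∫₀^∞ p(ℓ)·f(ℓ) dℓ = π√3/9. -/
/-!
After the substitution `u = ℓ √(α/2)` the integral becomes `4 ∫₀^∞ e^{-3u²} ∫₀^u e^{-z²} dz du`,
with no dependence on `α` left. Writing `z = u s`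
with `s ∈ (0, 1]` and swapping the integrals, the `u`-integral is the Gaussian first moment
`∫₀^∞ u e^{-(3+s²)u²} du = 1/(2(3+s²))`, and `∫₀¹ ds / (2(3+s²)) = arctan(1/√3)/(2√3) = π√3/36`.
-/

open Real MeasureTheory Set

theorem integral_Ioi_mul_exp_neg_mul_sq {b : ℝ} (hb : 0 < b) :
    ∫ x in Ioi 0, x * exp (-b * x ^ 2) = (2 * b)⁻¹ := by
  have h := integral_mul_cexp_neg_mul_sq (b := b) (by simpa using hb)
  apply Complex.ofReal_injective
  rw [← integral_complex_ofReal]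
  push_cast
  exact h

theorem integral_inv_add_sq {a : ℝ} (ha : 0 < a) :
    ∫ s in (0 : ℝ)..1, (a + s ^ 2)⁻¹ = arctan (√a)⁻¹ / √a := by
  have hs : √a ≠ 0 := (sqrt_pos.2 ha).ne'
  have h := intervalIntegral.integral_comp_div (fun t : ℝ => (1 + t ^ 2)⁻¹) (a := 0) (b := 1) hs
  rw [integral_inv_one_add_sq, zero_div, arctan_zero, sub_zero, one_div] at h
  have e : ∀ s : ℝ, (a + s ^ 2)⁻¹ = a⁻¹ * (1 + (s / √a) ^ 2)⁻¹ := fun s => by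
    rw [div_pow, sq_sqrt ha.le]; field_simp
  simp_rw [e]
  rw [intervalIntegral.integral_const_mul, h, smul_eq_mul]
  field_simp
  rw [sq_sqrt ha.le]

theorem integrable_mul_exp_neg_add_sq_mul_sq_prod {a : ℝ} (ha : 0 < a) :
    Integrable (fun p : ℝ × ℝ => p.1 * exp (-(a + p.2 ^ 2) * p.1 ^ 2))
      ((volume.restrict (Ioi 0)).prod (volume.restrict (Ioc 0 1))) := by
  have hdom : Integrable (fun p : ℝ × ℝ => p.1 * exp (-a * p.1 ^ 2) * 1)
      ((volume.restrict (Ioi 0)).prod (volume.restrict (Ioc 0 1))) :=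
    (integrable_mul_exp_neg_mul_sq ha).integrableOn.mul_prod (integrable_const 1)
  refine hdom.mono (by fun_prop) ?_
  rw [Measure.prod_restrict, ae_restrict_iff' (measurableSet_Ioi.prod measurableSet_Ioc)]
  refine Filter.Eventually.of_forall fun p ⟨(hu : 0 < p.1), _⟩ => ?_
  rw [mul_one, norm_mul, norm_mul, norm_of_nonneg hu.le, norm_of_nonneg (exp_pos _).le,
    norm_of_nonneg (exp_pos _).le]
  gcongr
  nlinarith [mul_nonneg (sq_nonneg p.2) (sq_nonneg p.1)]

theorem integral_exp_neg_mul_sq_mul_integral_exp_neg_sq {a : ℝ} (ha : 0 < a) :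
    ∫ u in Ioi 0, exp (-a * u ^ 2) * ∫ z in (0 : ℝ)..u, exp (-z ^ 2)
      = arctan (√a)⁻¹ / (2 * √a) := by
  -- substitute `z = u * s` in the inner integral
  have hsubst : ∀ u : ℝ, exp (-a * u ^ 2) * ∫ z in (0 : ℝ)..u, exp (-z ^ 2)
      = ∫ s in Ioc 0 1, u * exp (-(a + s ^ 2) * u ^ 2) := fun u => by
    rw [← intervalIntegral.integral_of_le zero_le_one, ← mul_one u, ← mul_zero u,
      ← intervalIntegral.mul_integral_comp_mul_left, mul_zero, mul_one, mul_left_comm,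
      ← intervalIntegral.integral_const_mul, ← intervalIntegral.integral_const_mul]
    congr 1 with s
    rw [← exp_add]; ring_nf
  simp_rw [hsubst]
  rw [integral_integral_swap (integrable_mul_exp_neg_add_sq_mul_sq_prod ha)]
  have hinner (s : ℝ) : ∫ u in Ioi 0, u * exp (-(a + s ^ 2) * u ^ 2) = (2 * (a + s ^ 2))⁻¹ :=
    integral_Ioi_mul_exp_neg_mul_sq (by positivity)
  simp_rw [hinner]
  rw [← intervalIntegral.integral_of_le zero_le_one]
  simp_rw [mul_inv]
  rw [intervalIntegral.integral_const_mul, integral_inv_add_sq ha]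
  ring

theorem integral_rayleigh_mul_erf_term {α : ℝ} (hα : 0 < α) :
    ∫ ℓ in Ioi 0, (2 * α * ℓ * exp (-(α * ℓ ^ 2))) *
        ((√π / (ℓ * √(2 * α))) * exp (-(α * ℓ ^ 2 / 2)) *
          ((2 / √π) * ∫ z in (0 : ℝ)..(ℓ * √(α / 2)), exp (-(z ^ 2))))
      = π * √3 / 9 := by
  obtain ⟨c, hc, rfl⟩ : ∃ c > 0, α = 2 * c ^ 2 :=
    ⟨√(α / 2), by positivity, by rw [sq_sqrt (by positivity)]; ring⟩
  have hsqrt : √(2 * (2 * c ^ 2)) = 2 * c := by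
    rw [show 2 * (2 * c ^ 2) = (2 * c) ^ 2 by ring, sqrt_sq (by positivity)]
  have hsqrt' : √(2 * c ^ 2 / 2) = c := by
    rw [mul_div_cancel_left₀ _ two_ne_zero, sqrt_sq hc.le]
  have hπ : 0 < √π := sqrt_pos.2 pi_pos
  have hpointwise : ∀ ℓ ∈ Ioi (0 : ℝ),
      2 * (2 * c ^ 2) * ℓ * exp (-(2 * c ^ 2 * ℓ ^ 2)) *
        (√π / (ℓ * (2 * c)) * exp (-(2 * c ^ 2 * ℓ ^ 2 / 2)) *
          (2 / √π * ∫ z in (0 : ℝ)..ℓ * c, exp (-z ^ 2)))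
      = 4 * c * (exp (-3 * (c * ℓ) ^ 2) * ∫ z in (0 : ℝ)..c * ℓ, exp (-z ^ 2)) := by
    intro ℓ (hℓ : 0 < ℓ)
    rw [mul_comm ℓ c, show -3 * (c * ℓ) ^ 2 = -(2 * c ^ 2 * ℓ ^ 2) + -(2 * c ^ 2 * ℓ ^ 2 / 2) by
      ring, exp_add]
    field_simp
    ring
  rw [hsqrt, hsqrt', setIntegral_congr_fun measurableSet_Ioi hpointwise, integral_const_mul,
    integral_comp_mul_left_Ioi (fun u => exp (-3 * u ^ 2) * ∫ z in (0 : ℝ)..u, exp (-z ^ 2)) 0 hc,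
    mul_zero, integral_exp_neg_mul_sq_mul_integral_exp_neg_sq three_pos, arctan_inv_sqrt_three,
    smul_eq_mul]
  have h3 : √3 ^ 2 = 3 := sq_sqrt (by norm_num)
  field_simp
  linear_combination (-12) * h3

theorem stmt_1_general (k : ℕ) (hk : 4 ≤ k) :
    let θ : ℝ := 2 * π / k
    let α : ℝ := Real.cos (θ / 2) / (4 * Real.sin (θ / 2))
    (∫ ℓ in Set.Ioi (0:ℝ),
        (2 * α * ℓ * Real.exp (-(α * ℓ ^ 2))) *
        ((Real.sqrt π / (ℓ * Real.sqrt (2 * α))) * Real.exp (-(α * ℓ ^ 2 / 2)) *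
          ((2 / Real.sqrt π) *
            ∫ z in (0:ℝ)..(ℓ * Real.sqrt (α / 2)), Real.exp (-(z ^ 2)))))
      = π * Real.sqrt 3 / 9 := by
  intro θ α
  have hk' : (2 : ℝ) < k := by exact_mod_cast (by omega : 2 < k)
  have hθ : θ / 2 = π / k := by ring
  have hθ_pos : 0 < π / k := by positivity
  have hθ_lt : π / k < π / 2 := div_lt_div_of_pos_left pi_pos two_pos hk'
  have hα : 0 < α := by
    rw [show α = cos (π / k) / (4 * sin (π / k)) by rw [← hθ]]
    exact div_pos (cos_pos_of_mem_Ioo ⟨by linarith, hθ_lt⟩)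
      (mul_pos four_pos (sin_pos_of_pos_of_lt_pi hθ_pos (by linarith)))
  exact integral_rayleigh_mul_erf_term hα

/-- For even k ≥ 4, with θ = 2π/k, α = cos(θ/2)/(4 sin(θ/2)),
f(ℓ) = (√π/(ℓ√(2α)))·exp(−αℓ²/2)·erf(ℓ√(α/2)) and p(ℓ) = 2αℓ·exp(−αℓ²),
we have ∫₀^∞ p(ℓ)·f(ℓ) dℓ = π√3/9. -/
theorem stmt_1 (k : ℕ) (hk : 4 ≤ k) (hke : Even k) :
    let θ : ℝ := 2 * π / k
    let α : ℝ := Real.cos (θ / 2) / (4 * Real.sin (θ / 2))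
    (∫ ℓ in Set.Ioi (0:ℝ),
        (2 * α * ℓ * Real.exp (-(α * ℓ ^ 2))) *
        ((Real.sqrt π / (ℓ * Real.sqrt (2 * α))) * Real.exp (-(α * ℓ ^ 2 / 2)) *
          ((2 / Real.sqrt π) *
            ∫ z in (0:ℝ)..(ℓ * Real.sqrt (α / 2)), Real.exp (-(z ^ 2)))))
      = π * Real.sqrt 3 / 9 :=
  stmt_1_general k hk
end

section
/- lim_{k→∞} p_k = 2·arctan(1/3), where p_k (for odd k ≥ 5) is given by the closed form p_k = 2(arctan(2(cos(π/k)+cos(3π/k))²/(αβ)) + arctan(4(2cos(2π/k)+sin(2π/k)²)/(αβ)))·cot(π/k)·β/(γα), with γ = 4 + 11cos(2π/k) + cos(6π/k), α = √((27cos(π/k)+17cos(3π/k)+3cos(5π/k)+cos(7π/k))·csc(π/k)/γ), and β = √(18sin(2π/k)+18sin(4π/k)+11sin(6π/k)+sin(8π/k)+sin(10π/k)). -/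
open Real Filter Topology

/-- The closed form for the mutual-edge probability `p_k` of the θ_k-graph
for odd `k ≥ 5`, as a function of a real parameter `k`. -/
noncomputable def pOdd (k : ℝ) : ℝ :=
  let γ : ℝ := 4 + 11 * Real.cos (2 * π / k) + Real.cos (6 * π / k)
  let α : ℝ := Real.sqrt
    ((27 * Real.cos (π / k) + 17 * Real.cos (3 * π / k) + 3 * Real.cos (5 * π / k) +
        Real.cos (7 * π / k)) * (Real.sin (π / k))⁻¹ / γ)
  let β : ℝ := Real.sqrt
    (18 * Real.sin (2 * π / k) + 18 * Real.sin (4 * π / k) + 11 * Real.sin (6 * π / k) +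
      Real.sin (8 * π / k) + Real.sin (10 * π / k))
  2 * (Real.arctan (2 * (Real.cos (π / k) + Real.cos (3 * π / k)) ^ 2 / (α * β)) +
        Real.arctan (4 * (2 * Real.cos (2 * π / k) + Real.sin (2 * π / k) ^ 2) / (α * β))) *
    (Real.tan (π / k))⁻¹ * β / (γ * α)

noncomputable def AA (t : ℝ) : ℝ :=
  27 * Real.cos t + 17 * Real.cos (3 * t) + 3 * Real.cos (5 * t) + Real.cos (7 * t)
noncomputable def BB (t : ℝ) : ℝ :=
  18 * Real.sin (2 * t) + 18 * Real.sin (4 * t) + 11 * Real.sin (6 * t) +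
    Real.sin (8 * t) + Real.sin (10 * t)
noncomputable def GG (t : ℝ) : ℝ := 4 + 11 * Real.cos (2 * t) + Real.cos (6 * t)
noncomputable def qq (t : ℝ) : ℝ := BB t / Real.sin t

noncomputable def PP (t : ℝ) : ℝ :=
  2 * (Real.arctan (2 * (Real.cos t + Real.cos (3 * t)) ^ 2 /
          (Real.sqrt (AA t * (Real.sin t)⁻¹ / GG t) * Real.sqrt (BB t))) +
        Real.arctan (4 * (2 * Real.cos (2 * t) + Real.sin (2 * t) ^ 2) /
          (Real.sqrt (AA t * (Real.sin t)⁻¹ / GG t) * Real.sqrt (BB t)))) *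
    (Real.tan t)⁻¹ * Real.sqrt (BB t) / (GG t * Real.sqrt (AA t * (Real.sin t)⁻¹ / GG t))

noncomputable def GF (t : ℝ) : ℝ :=
  2 * (Real.arctan (2 * (Real.cos t + Real.cos (3 * t)) ^ 2 / Real.sqrt (AA t * qq t / GG t)) +
        Real.arctan (4 * (2 * Real.cos (2 * t) + Real.sin (2 * t) ^ 2) /
          Real.sqrt (AA t * qq t / GG t))) *
    Real.cos t * Real.sqrt (qq t / (GG t * AA t))

lemma pOdd_eq (k : ℝ) : pOdd k = PP (π / k) := by
  simp only [pOdd, PP, AA, BB, GG]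
  rw [show 2 * π / k = 2 * (π / k) by ring, show 3 * π / k = 3 * (π / k) by ring,
    show 5 * π / k = 5 * (π / k) by ring, show 6 * π / k = 6 * (π / k) by ring,
    show 7 * π / k = 7 * (π / k) by ring, show 4 * π / k = 4 * (π / k) by ring,
    show 8 * π / k = 8 * (π / k) by ring, show 10 * π / k = 10 * (π / k) by ring]

lemma PP_eq_GF (t : ℝ) (hs : 0 < Real.sin t) (hc : 0 < Real.cos t)
    (hA : 0 < AA t) (hB : 0 ≤ BB t) (hG : 0 < GG t) : PP t = GF t := by
  have hq0 : 0 ≤ qq t := div_nonneg hB hs.le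
  have htan : 0 < Real.tan t := by rw [Real.tan_eq_sin_div_cos]; exact div_pos hs hc
  have hαβ : Real.sqrt (AA t * (Real.sin t)⁻¹ / GG t) * Real.sqrt (BB t)
      = Real.sqrt (AA t * qq t / GG t) := by
    rw [← Real.sqrt_mul (by positivity)]
    congr 1
    unfold qq
    field_simp
  have hα : 0 < Real.sqrt (AA t * (Real.sin t)⁻¹ / GG t) := Real.sqrt_pos.mpr (by positivity)
  have h2 : (Real.tan t)⁻¹ * Real.sqrt (BB t) / (GG t * Real.sqrt (AA t * (Real.sin t)⁻¹ / GG t))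
      = Real.cos t * Real.sqrt (qq t / (GG t * AA t)) := by
    have hL : 0 ≤ (Real.tan t)⁻¹ * Real.sqrt (BB t) /
        (GG t * Real.sqrt (AA t * (Real.sin t)⁻¹ / GG t)) := by positivity
    have hR : 0 ≤ Real.cos t * Real.sqrt (qq t / (GG t * AA t)) := by positivity
    have key : ((Real.tan t)⁻¹ * Real.sqrt (BB t) /
        (GG t * Real.sqrt (AA t * (Real.sin t)⁻¹ / GG t))) ^ 2
        = (Real.cos t * Real.sqrt (qq t / (GG t * AA t))) ^ 2 := by
      rw [div_pow, mul_pow, mul_pow, mul_pow, Real.sq_sqrt hB,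
        Real.sq_sqrt (by positivity : (0:ℝ) ≤ AA t * (Real.sin t)⁻¹ / GG t),
        Real.sq_sqrt (by positivity : (0:ℝ) ≤ qq t / (GG t * AA t)),
        Real.tan_eq_sin_div_cos]
      unfold qq
      field_simp
    nlinarith [key, hL, hR]
  unfold PP GF
  rw [hαβ, mul_assoc, mul_div_assoc, h2]
  ring

lemma sinc_lim : Tendsto (fun x : ℝ => Real.sin x / x) (𝓝[≠] (0:ℝ)) (𝓝 1) := by
  have h := hasDerivAt_iff_tendsto_slope.mp (Real.hasDerivAt_sin 0)
  rw [Real.cos_zero] at h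
  refine h.congr fun x => ?_
  simp [slope_def_field]

lemma nhdsGT_le : (𝓝[>] (0:ℝ)) ≤ 𝓝[≠] (0:ℝ) :=
  nhdsWithin_mono 0 fun x hx => ne_of_gt hx

lemma ratio_lim (m : ℝ) (hm : 0 < m) :
    Tendsto (fun t : ℝ => Real.sin (m * t) / Real.sin t) (𝓝[>] (0:ℝ)) (𝓝 m) := by
  have h1 : Tendsto (fun t : ℝ => m * t) (𝓝[>] (0:ℝ)) (𝓝[≠] (0:ℝ)) := by
    apply Tendsto.mono_right _ nhdsGT_le
    rw [tendsto_nhdsWithin_iff]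
    constructor
    · have : Tendsto (fun t : ℝ => m * t) (𝓝 (0:ℝ)) (𝓝 (m * 0)) :=
        (continuous_const.mul continuous_id).tendsto 0
      simpa using this.mono_left nhdsWithin_le_nhds
    · filter_upwards [self_mem_nhdsWithin] with t ht
      exact mul_pos hm ht
  have h2 : Tendsto (fun t : ℝ => Real.sin (m * t) / (m * t)) (𝓝[>] (0:ℝ)) (𝓝 1) :=
    sinc_lim.comp h1
  have h3 : Tendsto (fun t : ℝ => t / Real.sin t) (𝓝[>] (0:ℝ)) (𝓝 1) := by
    have h4 : Tendsto (fun t : ℝ => Real.sin t / t) (𝓝[>] (0:ℝ)) (𝓝 1) :=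
      sinc_lim.mono_left nhdsGT_le
    have := h4.inv₀ one_ne_zero
    simpa [inv_div] using this
  have h5 := (h2.mul h3).mul_const m
  rw [show (1:ℝ) * 1 * m = m by ring] at h5
  refine h5.congr' ?_
  filter_upwards [self_mem_nhdsWithin,
    (eventually_lt_nhds (by linarith [Real.pi_gt_three] : (0:ℝ) < π)).filter_mono
      nhdsWithin_le_nhds] with t ht htpi
  have hs : Real.sin t ≠ 0 := ne_of_gt (Real.sin_pos_of_pos_of_lt_pi ht htpi)
  have ht0 : t ≠ 0 := ne_of_gt ht
  field_simp

lemma qq_lim : Tendsto qq (𝓝[>] (0:ℝ)) (𝓝 192) := by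
  have h := ((((((ratio_lim 2 (by norm_num)).const_mul 18).add
      ((ratio_lim 4 (by norm_num)).const_mul 18)).add
      ((ratio_lim 6 (by norm_num)).const_mul 11)).add
      (ratio_lim 8 (by norm_num))).add (ratio_lim 10 (by norm_num)))
  rw [show (18:ℝ) * 2 + 18 * 4 + 11 * 6 + 8 + 10 = 192 by norm_num] at h
  refine h.congr fun t => ?_
  simp only [qq, BB, add_div, mul_div_assoc]

lemma AA_lim : Tendsto AA (𝓝[>] (0:ℝ)) (𝓝 48) := by
  have hc : ContinuousAt AA 0 := by unfold AA; fun_prop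
  have h2 : Tendsto AA (𝓝[>] (0:ℝ)) (𝓝 (AA 0)) := hc.tendsto.mono_left nhdsWithin_le_nhds
  rw [show AA 0 = 48 by norm_num [AA]] at h2; exact h2

lemma GG_lim : Tendsto GG (𝓝[>] (0:ℝ)) (𝓝 16) := by
  have hc : ContinuousAt GG 0 := by unfold GG; fun_prop
  have h2 : Tendsto GG (𝓝[>] (0:ℝ)) (𝓝 (GG 0)) := hc.tendsto.mono_left nhdsWithin_le_nhds
  rw [show GG 0 = 16 by norm_num [GG]] at h2; exact h2

lemma GF_lim : Tendsto GF (𝓝[>] (0:ℝ)) (𝓝 (2 * Real.arctan (1 / 3))) := by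
  have hD : Tendsto (fun t => Real.sqrt (AA t * qq t / GG t)) (𝓝[>] (0:ℝ)) (𝓝 24) := by
    have h : Tendsto (fun t => AA t * qq t / GG t) (𝓝[>] (0:ℝ)) (𝓝 (48 * 192 / 16)) :=
      (AA_lim.mul qq_lim).div GG_lim (by norm_num)
    have h2 := (Real.continuous_sqrt.tendsto _).comp h
    rw [show Real.sqrt (48 * 192 / 16) = 24 by
      rw [show (48 * 192 / 16 : ℝ) = 24 ^ 2 by norm_num, Real.sqrt_sq (by norm_num)]] at h2
    exact h2
  have hN1 : Tendsto (fun t => 2 * (Real.cos t + Real.cos (3 * t)) ^ 2) (𝓝[>] (0:ℝ)) (𝓝 8) := by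
    have hc : ContinuousAt (fun t : ℝ => 2 * (Real.cos t + Real.cos (3 * t)) ^ 2) 0 := by fun_prop
    have h2 : Tendsto (fun t : ℝ => 2 * (Real.cos t + Real.cos (3 * t)) ^ 2) (𝓝[>] (0:ℝ))
        (𝓝 (2 * (Real.cos 0 + Real.cos (3 * 0)) ^ 2)) := hc.tendsto.mono_left nhdsWithin_le_nhds
    norm_num at h2; exact h2
  have hN2 : Tendsto (fun t => 4 * (2 * Real.cos (2 * t) + Real.sin (2 * t) ^ 2)) (𝓝[>] (0:ℝ))
      (𝓝 8) := by
    have hc : ContinuousAt (fun t : ℝ => 4 * (2 * Real.cos (2 * t) + Real.sin (2 * t) ^ 2)) 0 := by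
      fun_prop
    have h2 : Tendsto (fun t : ℝ => 4 * (2 * Real.cos (2 * t) + Real.sin (2 * t) ^ 2)) (𝓝[>] (0:ℝ))
        (𝓝 (4 * (2 * Real.cos (2 * 0) + Real.sin (2 * 0) ^ 2))) :=
      hc.tendsto.mono_left nhdsWithin_le_nhds
    norm_num at h2; exact h2
  have harc1 := (Real.continuous_arctan.tendsto _).comp (hN1.div hD (by norm_num))
  have harc2 := (Real.continuous_arctan.tendsto _).comp (hN2.div hD (by norm_num))
  rw [show (8:ℝ) / 24 = 1 / 3 by norm_num] at harc1 harc2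
  have hcos : Tendsto (fun t : ℝ => Real.cos t) (𝓝[>] (0:ℝ)) (𝓝 1) := by
    have := Real.continuous_cos.tendsto 0
    rw [Real.cos_zero] at this
    exact this.mono_left nhdsWithin_le_nhds
  have hS : Tendsto (fun t => Real.sqrt (qq t / (GG t * AA t))) (𝓝[>] (0:ℝ)) (𝓝 (1 / 2)) := by
    have h : Tendsto (fun t => qq t / (GG t * AA t)) (𝓝[>] (0:ℝ)) (𝓝 (192 / (16 * 48))) :=
      qq_lim.div (GG_lim.mul AA_lim) (by norm_num)
    have h2 := (Real.continuous_sqrt.tendsto _).comp h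
    rw [show Real.sqrt (192 / (16 * 48)) = 1 / 2 by
      rw [show (192 / (16 * 48) : ℝ) = (1 / 2) ^ 2 by norm_num,
        Real.sqrt_sq (by norm_num)]] at h2
    exact h2
  have hfin := (((harc1.add harc2).const_mul 2).mul hcos).mul hS
  rw [show (2 : ℝ) * (Real.arctan (1 / 3) + Real.arctan (1 / 3)) * 1 * (1 / 2)
      = 2 * Real.arctan (1 / 3) by ring] at hfin
  exact hfin

lemma pOdd_lim : Tendsto pOdd atTop (𝓝 (2 * Real.arctan (1 / 3))) := by
  have hπ : Tendsto (fun k : ℝ => π / k) atTop (𝓝[>] (0:ℝ)) := by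
    rw [tendsto_nhdsWithin_iff]
    constructor
    · exact tendsto_const_nhds.div_atTop tendsto_id
    · filter_upwards [eventually_gt_atTop (0:ℝ)] with k hk
      exact div_pos Real.pi_pos hk
  have hcomp : Tendsto (fun k : ℝ => GF (π / k)) atTop (𝓝 (2 * Real.arctan (1 / 3))) :=
    GF_lim.comp hπ
  refine hcomp.congr' ?_
  have hApos : ∀ᶠ t in 𝓝[>] (0:ℝ), 0 < AA t := AA_lim.eventually (eventually_gt_nhds (by norm_num))
  have hGpos : ∀ᶠ t in 𝓝[>] (0:ℝ), 0 < GG t := GG_lim.eventually (eventually_gt_nhds (by norm_num))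
  have hqpos : ∀ᶠ t in 𝓝[>] (0:ℝ), 0 < qq t := qq_lim.eventually (eventually_gt_nhds (by norm_num))
  have hsmall : ∀ᶠ t in 𝓝[>] (0:ℝ), t < 1 :=
    (eventually_lt_nhds (by norm_num : (0:ℝ) < 1)).filter_mono nhdsWithin_le_nhds
  have hall : ∀ᶠ t in 𝓝[>] (0:ℝ), GF t = PP t := by
    filter_upwards [hApos, hGpos, hqpos, hsmall, self_mem_nhdsWithin] with t hA hG hq ht1 ht0
    have hs : 0 < Real.sin t :=
      Real.sin_pos_of_pos_of_lt_pi ht0 (by linarith [Real.pi_gt_three])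
    have ht0' : (0:ℝ) < t := ht0
    have hc : 0 < Real.cos t := by
      apply Real.cos_pos_of_mem_Ioo
      constructor
      · linarith [Real.pi_pos]
      · linarith [Real.pi_gt_three]
    have hB : 0 ≤ BB t := by
      have : BB t = qq t * Real.sin t := by
        rw [qq, div_mul_cancel₀ _ (ne_of_gt hs)]
      rw [this]; positivity
    exact (PP_eq_GF t hs hc hA hB hG).symm
  filter_upwards [hπ.eventually hall] with k hk
  show GF (π / k) = pOdd k
  rw [pOdd_eq, ← hk]

/-- lim_{k→∞} p_k = 2·arctan(1/3), the limit being taken over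
odd natural numbers k ≥ 5, where p_k is the closed form for odd k. -/
theorem stmt_3 :
    Tendsto (fun k : ℕ => pOdd k)
      (atTop ⊓ Filter.principal {k : ℕ | Odd k ∧ 5 ≤ k})
      (nhds (2 * Real.arctan (1 / 3))) := by
  exact (pOdd_lim.comp tendsto_natCast_atTop_atTop).mono_left inf_le_left
end

section
/- Let C be the cone {u ∈ ℝ² : the angle from the positive x-axis to u lies in [0, θ)} with apex angle θ = 2π/k, k even, k ≥ 4, and let T be the open isosceles triangle with apex at the origin, symmetric about the axis of C, whose side opposite the apex has length ℓ and lies at distance (ℓ/2)·cot(θ/2) from the apex. Let w be the point on that opposite side at distance r from one endpoint (0 ≤ r ≤ ℓ), and let T' be the reflection of T through the midpoint of the segment from the origin to w. Then the area of T' \ T equals α(r² + (ℓ−r)²), where α = cos(θ/2)/(4 sin(θ/2)). -/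
/-
A linear map sends the standard triangle `S = {x, y ≥ 0, x + y ≤ 1}` onto the triangle `0ab`
and the point `(1 - t, t)` of its hypotenuse onto `w = a + t (b - a)`, multiplying areas by the
cross product `a × b`, which for the triangle of the theorem is `ℓ h` with `h` its height. For `p`
on the hypotenuse, `(p - S) ∩ S` is the rectangle `[0, p₁] × [0, p₂]`, so
`area ((p - S) \ S) = 1/2 - p₁ p₂ = (p₁² + p₂²) / 2`. Boundaries of convex sets are null, so
passing to the open triangles changes no area.
-/

open Real MeasureTheory Set

def stdTriangle : Set (ℝ × ℝ) := {p | 0 ≤ p.1 ∧ 0 ≤ p.2 ∧ p.1 + p.2 ≤ 1}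

lemma convex_stdTriangle : Convex ℝ stdTriangle := by
  rintro x ⟨hx1, hx2, hx3⟩ y ⟨hy1, hy2, hy3⟩ s t hs ht hst
  simp only [stdTriangle, mem_ofPred_eq, Prod.fst_add, Prod.snd_add, Prod.smul_fst,
    Prod.smul_snd, smul_eq_mul]
  refine ⟨by positivity, by positivity, by nlinarith⟩

lemma isClosed_stdTriangle : IsClosed stdTriangle :=
  (isClosed_le continuous_const continuous_fst).inter <|
    (isClosed_le continuous_const continuous_snd).inter <|
      isClosed_le (continuous_fst.add continuous_snd) continuous_const

lemma interior_stdTriangle :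
    interior stdTriangle = {p : ℝ × ℝ | 0 < p.1 ∧ 0 < p.2 ∧ p.1 + p.2 < 1} := by
  have hsum : IsOpenMap fun p : ℝ × ℝ => p.1 + p.2 :=
    (LinearMap.fst ℝ ℝ ℝ + LinearMap.snd ℝ ℝ ℝ).isOpenMap_of_finiteDimensional
      fun x => ⟨(x, 0), by simp⟩
  have : stdTriangle = Prod.fst ⁻¹' Ici 0 ∩ Prod.snd ⁻¹' Ici 0 ∩
      (fun p : ℝ × ℝ => p.1 + p.2) ⁻¹' Iic 1 := by
    ext p; simp [stdTriangle, and_assoc]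
  rw [this, interior_inter, interior_inter,
    ← isOpenMap_fst.preimage_interior_eq_interior_preimage continuous_fst,
    ← isOpenMap_snd.preimage_interior_eq_interior_preimage continuous_snd,
    ← hsum.preimage_interior_eq_interior_preimage (by fun_prop), interior_Ici, interior_Iic]
  ext p; simp [and_assoc]

lemma volume_stdTriangle : volume stdTriangle = ENNReal.ofReal (1 / 2) := by
  have hint : ∫ x in Ioo (0 : ℝ) 1, (1 - x) = 1 / 2 := by
    rw [← integral_Ioc_eq_integral_Ioo, ← intervalIntegral.integral_of_le zero_le_one,
      intervalIntegral.integral_sub intervalIntegrable_const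
        intervalIntegral.intervalIntegrable_id, integral_id, intervalIntegral.integral_const]
    norm_num
  have hregion : interior stdTriangle = regionBetween 0 (fun x => 1 - x) (Ioo 0 1) := by
    rw [interior_stdTriangle]
    ext p
    simp only [regionBetween, mem_ofPred_eq, mem_Ioo, Pi.zero_apply]
    constructor
    · rintro ⟨h1, h2, h3⟩; exact ⟨⟨h1, by linarith⟩, h2, by linarith⟩
    · rintro ⟨⟨h1, -⟩, h2, h3⟩; exact ⟨h1, h2, by linarith⟩
  have hf : IntegrableOn (0 : ℝ → ℝ) (Ioo 0 1) := integrableOn_zero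
  have hg : IntegrableOn (fun x : ℝ => 1 - x) (Ioo 0 1) :=
    (continuous_const.sub continuous_id).integrableOn_Icc.mono_set Ioo_subset_Icc_self
  rw [← measure_interior_of_null_frontier (convex_stdTriangle.addHaar_frontier volume), hregion,
    Measure.volume_eq_prod, volume_regionBetween_eq_integral hf hg measurableSet_Ioo
      fun x hx => by simp only [Pi.zero_apply]; linarith [hx.2]]
  simpa using congrArg ENNReal.ofReal hint

lemma convexHull_zero_basis_eq_stdTriangle :
    convexHull ℝ {0, (1, 0), (0, 1)} = stdTriangle := by
  refine Subset.antisymm (convexHull_min ?_ convex_stdTriangle) ?_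
  · rintro x (rfl | rfl | rfl) <;> simp [stdTriangle]
  · rintro x ⟨h₁, h₂, h₃⟩
    have hmem := (convex_convexHull ℝ ({0, (1, 0), (0, 1)} : Set (ℝ × ℝ))).sum_mem
      (t := Finset.univ) (w := ![1 - x.1 - x.2, x.1, x.2]) (z := ![0, (1, 0), (0, 1)])
      (fun i _ => by fin_cases i <;> simp <;> linarith)
      (by simp [Fin.sum_univ_three]; ring)
      (fun i _ => by fin_cases i <;> exact subset_convexHull ℝ _ (by simp))
    simpa [Fin.sum_univ_three] using hmem

lemma sub_image_stdTriangle_inter_self {p : ℝ × ℝ} (hp : p.1 + p.2 = 1) :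
    (fun x => p - x) '' stdTriangle ∩ stdTriangle = Icc 0 p.1 ×ˢ Icc 0 p.2 := by
  rw [image_sub_left]
  ext x
  simp only [stdTriangle, mem_inter_iff, mem_preimage, mem_ofPred_eq, mem_prod, mem_Icc,
    Prod.fst_add, Prod.snd_add, Prod.fst_neg, Prod.snd_neg]
  constructor
  · rintro ⟨⟨h₁, h₂, -⟩, h₃, h₄, -⟩
    exact ⟨⟨h₃, by linarith⟩, h₄, by linarith⟩
  · rintro ⟨⟨h₁, h₂⟩, h₃, h₄⟩
    exact ⟨⟨by linarith, by linarith, by linarith⟩, h₁, h₃, by linarith⟩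

lemma volume_sub_image_stdTriangle_sdiff {p : ℝ × ℝ} (hp₁ : 0 ≤ p.1) (hp₂ : 0 ≤ p.2)
    (hp : p.1 + p.2 = 1) :
    volume ((fun x => p - x) '' stdTriangle \ stdTriangle) =
      ENNReal.ofReal ((p.1 ^ 2 + p.2 ^ 2) / 2) := by
  have himage : volume ((fun x => p - x) '' stdTriangle) = volume stdTriangle := by
    have hinv : Function.Involutive fun x : ℝ × ℝ => p - x := sub_sub_cancel p
    rw [hinv.image_eq_preimage_symm]
    exact (volume.measurePreserving_sub_left p).measure_preimage
      isClosed_stdTriangle.measurableSet.nullMeasurableSet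
  have hinter : volume ((fun x => p - x) '' stdTriangle ∩ stdTriangle) =
      ENNReal.ofReal (p.1 * p.2) := by
    rw [sub_image_stdTriangle_inter_self hp, Measure.volume_eq_prod, Measure.prod_prod,
      Real.volume_Icc, Real.volume_Icc, sub_zero, sub_zero, ← ENNReal.ofReal_mul hp₁]
  have hsplit := measure_sdiff_add_inter (μ := volume) ((fun x => p - x) '' stdTriangle)
    isClosed_stdTriangle.measurableSet
  have hhalf : (1 / 2 : ℝ) = (p.1 ^ 2 + p.2 ^ 2) / 2 + p.1 * p.2 := by
    linear_combination -(p.1 + p.2 + 1) * hp / 2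
  rw [hinter, himage, volume_stdTriangle, hhalf,
    ENNReal.ofReal_add (by positivity) (by positivity)] at hsplit
  exact (ENNReal.add_left_inj ENNReal.ofReal_ne_top).1 hsplit

noncomputable def planeMap (a b : ℝ × ℝ) : ℝ × ℝ →ₗ[ℝ] ℝ × ℝ :=
  Matrix.toLin (Module.Basis.finTwoProd ℝ) (Module.Basis.finTwoProd ℝ) !![a.1, b.1; a.2, b.2]

lemma planeMap_apply (a b x : ℝ × ℝ) : planeMap a b x = x.1 • a + x.2 • b := by
  ext <;> simp [planeMap] <;> ring

lemma det_planeMap (a b : ℝ × ℝ) : LinearMap.det (planeMap a b) = a.1 * b.2 - a.2 * b.1 := by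
  rw [planeMap, LinearMap.det_toLin, Matrix.det_fin_two_of]
  ring

lemma injective_planeMap {a b : ℝ × ℝ} (hab : a.1 * b.2 - a.2 * b.1 ≠ 0) :
    Function.Injective (planeMap a b) :=
  ((Module.End.isUnit_iff _).1 <| (LinearMap.isUnit_iff_isUnit_det _).2 <|
    (det_planeMap a b).symm ▸ hab.isUnit).1

lemma convexHull_zero_pair_eq_image_planeMap (a b : ℝ × ℝ) :
    convexHull ℝ {0, a, b} = planeMap a b '' stdTriangle := by
  rw [← convexHull_zero_basis_eq_stdTriangle, LinearMap.image_convexHull, image_insert_eq,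
    image_insert_eq, image_singleton, map_zero, planeMap_apply, planeMap_apply]
  simp

theorem Convex.addHaar_interior_sdiff_interior {E : Type*} [NormedAddCommGroup E]
    [NormedSpace ℝ E] [MeasurableSpace E] [BorelSpace E] [FiniteDimensional ℝ E]
    (μ : Measure E) [μ.IsAddHaarMeasure] {s t : Set E} (hs : Convex ℝ s) (ht : Convex ℝ t) :
    μ (interior s \ interior t) = μ (s \ t) :=
  measure_congr <| (interior_ae_eq_of_null_frontier (hs.addHaar_frontier μ)).diff
    (interior_ae_eq_of_null_frontier (ht.addHaar_frontier μ))

theorem volume_sub_image_interior_convexHull_sdiff {a b : ℝ × ℝ}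
    (hab : a.1 * b.2 - a.2 * b.1 ≠ 0) {t : ℝ} (ht₀ : 0 ≤ t) (ht₁ : t ≤ 1) :
    volume ((fun x => a + t • (b - a) - x) '' interior (convexHull ℝ {0, a, b}) \
        interior (convexHull ℝ {0, a, b})) =
      ENNReal.ofReal (|a.1 * b.2 - a.2 * b.1| * (t ^ 2 + (1 - t) ^ 2) / 2) := by
  set w := a + t • (b - a)
  have hw : w = planeMap a b (1 - t, t) := by
    rw [planeMap_apply]; module
  have hinterior : (fun x => w - x) '' interior (convexHull ℝ {0, a, b}) =
      interior ((fun x => w - x) '' convexHull ℝ {0, a, b}) :=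
    (Homeomorph.subLeft w).image_interior _
  have hreflect : (fun x => w - x) '' convexHull ℝ {0, a, b} =
      planeMap a b '' ((fun x => ((1 - t, t) : ℝ × ℝ) - x) '' stdTriangle) := by
    rw [convexHull_zero_pair_eq_image_planeMap, image_image, image_image, hw]
    simp only [map_sub]
  rw [hinterior, Convex.addHaar_interior_sdiff_interior volume
      (by simpa [sub_eq_add_neg] using (convex_convexHull ℝ _).affinity w (-1))
      (convex_convexHull ℝ _),
    hreflect, convexHull_zero_pair_eq_image_planeMap, ← image_sdiff (injective_planeMap hab),
    Measure.addHaar_image_linearMap, det_planeMap,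
    volume_sub_image_stdTriangle_sdiff (by simpa using ht₁) ht₀ (by simp),
    ← ENNReal.ofReal_mul (abs_nonneg _)]
  congr 1
  ring

theorem stmt_5_general (k : ℕ) (hk : 4 ≤ k) (ℓ r : ℝ) (hℓ : 0 < ℓ)
    (hr0 : 0 ≤ r) (hrℓ : r ≤ ℓ) :
    let θ : ℝ := 2 * π / k
    let α : ℝ := Real.cos (θ / 2) / (4 * Real.sin (θ / 2))
    let axis : ℝ × ℝ := (Real.cos (θ / 2), Real.sin (θ / 2))
    let perp : ℝ × ℝ := (-Real.sin (θ / 2), Real.cos (θ / 2))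
    let h : ℝ := (ℓ / 2) * (Real.tan (θ / 2))⁻¹
    -- the two endpoints of the side of T opposite the apex
    let a : ℝ × ℝ := h • axis - (ℓ / 2) • perp
    let b : ℝ × ℝ := h • axis + (ℓ / 2) • perp
    -- the point on that side at distance r from the endpoint a
    let w : ℝ × ℝ := a + (r / ℓ) • (b - a)
    let T : Set (ℝ × ℝ) := interior (convexHull ℝ {(0 : ℝ × ℝ), a, b})
    let T' : Set (ℝ × ℝ) := (fun x => w - x) '' T
    volume (T' \ T) = ENNReal.ofReal (α * (r ^ 2 + (ℓ - r) ^ 2)) := by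
  intro θ α axis perp h a b w T T'
  have hk' : (4 : ℝ) ≤ k := by exact_mod_cast hk
  have hθ : θ / 2 = π / k := by ring
  have hθ₀ : 0 < θ / 2 := by rw [hθ]; positivity
  have hθ₁ : θ / 2 < π / 2 := by
    rw [hθ, div_lt_div_iff_of_pos_left pi_pos (by positivity) two_pos]; linarith
  have hsin : 0 < sin (θ / 2) := sin_pos_of_pos_of_lt_pi hθ₀ (by linarith)
  have hcos : 0 < cos (θ / 2) := cos_pos_of_mem_Ioo ⟨by linarith, hθ₁⟩
  have hh : h = ℓ / 2 * (cos (θ / 2) / sin (θ / 2)) := by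
    simp only [h, tan_eq_sin_div_cos, inv_div]
  have hdet : a.1 * b.2 - a.2 * b.1 = ℓ * h := by
    simp only [a, b, axis, perp, Prod.fst_add, Prod.snd_add, Prod.fst_sub, Prod.snd_sub,
      Prod.smul_fst, Prod.smul_snd, smul_eq_mul]
    linear_combination ℓ * h * sin_sq_add_cos_sq (θ / 2)
  have hdet_pos : 0 < ℓ * h := by rw [hh]; positivity
  refine (volume_sub_image_interior_convexHull_sdiff (hdet ▸ hdet_pos.ne')
    (div_nonneg hr0 hℓ.le) ((div_le_one hℓ).2 hrℓ)).trans ?_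
  rw [hdet, abs_of_pos hdet_pos, hh]
  congr 1
  simp only [α]
  field_simp
  ring

/-- Let θ = 2π/k with k even, k ≥ 4. Let T ⊂ ℝ² be the open
isosceles triangle with apex at the origin, symmetric about the axis of the
cone {u : angle(u) ∈ [0,θ)} (the axis makes angle θ/2 with the x-axis), whose
side opposite the apex has length ℓ and lies at distance (ℓ/2)·cot(θ/2) from
the apex.  Let w be the point on that opposite side at distance r from one
endpoint (0 ≤ r ≤ ℓ), and let T' be the reflection of T through the midpoint
of the segment from the origin to w (i.e. the image of T under x ↦ w − x).
Then area(T' \ T) = α(r² + (ℓ−r)²) with α = cos(θ/2)/(4 sin(θ/2)). -/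
theorem stmt_5 (k : ℕ) (hk : 4 ≤ k) (hke : Even k) (ℓ r : ℝ) (hℓ : 0 < ℓ)
    (hr0 : 0 ≤ r) (hrℓ : r ≤ ℓ) :
    let θ : ℝ := 2 * π / k
    let α : ℝ := Real.cos (θ / 2) / (4 * Real.sin (θ / 2))
    let axis : ℝ × ℝ := (Real.cos (θ / 2), Real.sin (θ / 2))
    let perp : ℝ × ℝ := (-Real.sin (θ / 2), Real.cos (θ / 2))
    let h : ℝ := (ℓ / 2) * (Real.tan (θ / 2))⁻¹
    -- the two endpoints of the side of T opposite the apex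
    let a : ℝ × ℝ := h • axis - (ℓ / 2) • perp
    let b : ℝ × ℝ := h • axis + (ℓ / 2) • perp
    -- the point on that side at distance r from the endpoint a
    let w : ℝ × ℝ := a + (r / ℓ) • (b - a)
    let T : Set (ℝ × ℝ) := interior (convexHull ℝ {(0 : ℝ × ℝ), a, b})
    let T' : Set (ℝ × ℝ) := (fun x => w - x) '' T
    volume (T' \ T) = ENNReal.ofReal (α * (r ^ 2 + (ℓ - r) ^ 2)) :=
  stmt_5_general k hk ℓ r hℓ hr0 hrℓ
end

section
/- For any α > 0, the double integral ∫₀^∞ ∫₀^ℓ 2α·exp(−αℓ² − α(r² + (ℓ−r)²)) dr dℓ is independent of α. -/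
open Real MeasureTheory

lemma stmt_15_aux (α : ℝ) (hα : 0 < α) :
    (∫ ℓ in Set.Ioi (0:ℝ), ∫ r in (0:ℝ)..ℓ,
        2 * α * Real.exp (-(α * ℓ ^ 2) - α * (r ^ 2 + (ℓ - r) ^ 2)))
      = 2 * ∫ t in Set.Ioi (0:ℝ), ∫ u in (0:ℝ)..t,
          Real.exp (-(t ^ 2) - (u ^ 2 + (t - u) ^ 2)) := by
  set s := Real.sqrt α with hsdef
  have hs : 0 < s := Real.sqrt_pos.mpr hα
  have hs2 : s ^ 2 = α := Real.sq_sqrt hα.le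
  have inner : ∀ ℓ : ℝ,
      (∫ r in (0:ℝ)..ℓ, 2 * α * Real.exp (-(α * ℓ ^ 2) - α * (r ^ 2 + (ℓ - r) ^ 2)))
        = (2 * α / s) * ∫ u in (0:ℝ)..(s * ℓ),
            Real.exp (-((s*ℓ) ^ 2) - (u ^ 2 + (s*ℓ - u) ^ 2)) := by
    intro ℓ
    have h1 : ∀ r : ℝ,
        2 * α * Real.exp (-(α * ℓ ^ 2) - α * (r ^ 2 + (ℓ - r) ^ 2))
          = 2 * α * Real.exp (-((s*ℓ) ^ 2) - ((s*r) ^ 2 + (s*ℓ - s*r) ^ 2)) := by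
      intro r
      congr 1
      congr 1
      have : (s*ℓ) ^ 2 = α * ℓ ^ 2 := by rw [mul_pow, hs2]
      rw [this]
      have h2 : (s*r) ^ 2 = α * r ^ 2 := by rw [mul_pow, hs2]
      have h3 : (s*ℓ - s*r) ^ 2 = α * (ℓ - r) ^ 2 := by
        rw [← mul_sub, mul_pow, hs2]
      rw [h2, h3]; ring
    simp_rw [h1]
    rw [intervalIntegral.integral_const_mul,
      intervalIntegral.integral_comp_mul_left
        (fun u => Real.exp (-((s*ℓ) ^ 2) - (u ^ 2 + (s*ℓ - u) ^ 2))) hs.ne',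
      mul_zero, smul_eq_mul]
    ring
  simp_rw [inner]
  rw [MeasureTheory.integral_const_mul,
    MeasureTheory.integral_comp_mul_left_Ioi
      (fun t => ∫ u in (0:ℝ)..t, Real.exp (-(t ^ 2) - (u ^ 2 + (t - u) ^ 2))) 0 hs,
    mul_zero, smul_eq_mul]
  field_simp
  rw [← hs2]

/-- for α > 0, the double integral
∫₀^∞ ∫₀^ℓ 2α·exp(−αℓ² − α(r² + (ℓ−r)²)) dr dℓ does not depend on α. -/
theorem stmt_15 (α α' : ℝ) (hα : 0 < α) (hα' : 0 < α') :
    (∫ ℓ in Set.Ioi (0:ℝ), ∫ r in (0:ℝ)..ℓ,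
        2 * α * Real.exp (-(α * ℓ ^ 2) - α * (r ^ 2 + (ℓ - r) ^ 2)))
      = ∫ ℓ in Set.Ioi (0:ℝ), ∫ r in (0:ℝ)..ℓ,
          2 * α' * Real.exp (-(α' * ℓ ^ 2) - α' * (r ^ 2 + (ℓ - r) ^ 2)) := by
  rw [stmt_15_aux α hα, stmt_15_aux α' hα']
end
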